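/- Let M be a monoid and A a finitely presented M-act with a presentation ⟨X | S⟩ where X is finite (S possibly infinite). Then there exists a finite subset S′ ⊆ S such that A is defined by the presentation ⟨X | S′⟩. -/

import Mathlib

/-- A right act of a monoid `M` on a type `A`. -/
structure RActOn (M : Type*) [Monoid M] (A : Type*) where
  act : A → M → A
  act_one : ∀ a, act a 1 = a
  act_mul : ∀ a m n, act a (m * n) = act (act a m) n

namespace RActOn

variable {M : Type*} [Monoid M]

/-- `f` is a homomorphism of `M`-acts. -/
def IsHom {A B : Type*} (α : RActOn M A) (β : RActOn M B) (f : A → B) : Prop :=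
  ∀ a m, f (α.act a m) = β.act (f a) m

/-- The two acts are isomorphic. -/
def Isomorphic {A B : Type*} (α : RActOn M A) (β : RActOn M B) : Prop :=
  ∃ f : A → B, IsHom α β f ∧ Function.Bijective f

/-- `ρ` is an `M`-act congruence on `A`. -/
def IsCong {A : Type*} (α : RActOn M A) (ρ : A → A → Prop) : Prop :=
  Equivalence ρ ∧ ∀ a b m, ρ a b → ρ (α.act a m) (α.act b m)

/-- The smallest congruence containing the relation `X`. -/
def congClosure {A : Type*} (α : RActOn M A) (X : A → A → Prop) : A → A → Prop :=
  fun a b => ∀ ρ : A → A → Prop, IsCong α ρ → (∀ x y, X x y → ρ x y) → ρ a b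

/-- The free `M`-act on a set `X`: carrier `X × M`, action `(x, m) · n = (x, m * n)`. -/
def free (M : Type*) [Monoid M] (X : Type*) : RActOn M (X × M) where
  act p n := (p.1, p.2 * n)
  act_one := by intro a; simp
  act_mul := by intro a m n; simp [mul_assoc]

/-- The `M`-act `α` is defined by the presentation `⟨X | R⟩`. -/
def DefinedBy {A : Type*} (α : RActOn M A) (X : Type*)
    (R : Set ((X × M) × (X × M))) : Prop :=
  ∃ f : X × M → A, Function.Surjective f ∧ IsHom (free M X) α f ∧
    ∀ u v : X × M, f u = f v ↔ congClosure (free M X) (fun a b => (a, b) ∈ R) u v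

/-- The `M`-act `α` is finitely presented. -/
def FinitelyPresented {A : Type*} (α : RActOn M A) : Prop :=
  ∃ (X : Type) (_ : Finite X) (R : Set ((X × M) × (X × M))),
    R.Finite ∧ DefinedBy α X R

/-- The `M`-act `α` is finitely generated. -/
def FinitelyGenerated {A : Type*} (α : RActOn M A) : Prop :=
  ∃ U : Set A, U.Finite ∧ ∀ a : A, ∃ u ∈ U, ∃ m : M, α.act u m = a

/-- `B` is a subact of `A`. -/
def IsSubact {A : Type*} (α : RActOn M A) (B : Set A) : Prop :=
  ∀ b ∈ B, ∀ m : M, α.act b m ∈ B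

/-- The subset `S` is generated, as a subact, by `U ⊆ S`. -/
def FGSet {A : Type*} (α : RActOn M A) (S : Set A) : Prop :=
  ∃ U ⊆ S, U.Finite ∧ ∀ a ∈ S, ∃ u ∈ U, ∃ m : M, α.act u m = a

/-- The act induced on a subact. -/
def subAct {A : Type*} (α : RActOn M A) (B : Set A) (hB : IsSubact α B) :
    RActOn M B where
  act b m := ⟨α.act b m, hB b b.2 m⟩
  act_one := by intro a; ext; simp [α.act_one]
  act_mul := by intro a m n; ext; simp [α.act_mul]

/-- The Rees congruence relation determined by `B`. -/
def reesRel {A : Type*} (B : Set A) : A → A → Prop :=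
  fun a b => a = b ∨ (a ∈ B ∧ b ∈ B)

/-- The Rees quotient act `A / B`. -/
def reesAct {A : Type*} (α : RActOn M A) (B : Set A) (hB : IsSubact α B) :
    RActOn M (Quot (reesRel B)) where
  act q m := Quot.lift (fun a => Quot.mk _ (α.act a m))
    (by
      intro a b h
      apply Quot.sound
      rcases h with h | ⟨ha, hb⟩
      · exact Or.inl (by rw [h])
      · exact Or.inr ⟨hB a ha m, hB b hb m⟩) q
  act_one := by
    intro q
    induction q using Quot.ind with
    | _ a => simp [α.act_one]
  act_mul := by
    intro q m n
    induction q using Quot.ind with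
    | _ a => simp [α.act_mul]

/-- The trivial one-element `M`-act. -/
def trivAct (M : Type*) [Monoid M] : RActOn M PUnit where
  act _ _ := PUnit.unit
  act_one := by intro a; rfl
  act_mul := by intro a m n; rfl

/-- The disjoint union of two `M`-acts. -/
def sumAct {A B : Type*} (α : RActOn M A) (β : RActOn M B) : RActOn M (A ⊕ B) where
  act x m := Sum.elim (fun a => Sum.inl (α.act a m)) (fun b => Sum.inr (β.act b m)) x
  act_one := by intro x; cases x <;> simp [α.act_one, β.act_one]
  act_mul := by intro x m n; cases x <;> simp [α.act_mul, β.act_mul]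

/-- The `M`-act `M` itself, by right multiplication. -/
def selfAct (M : Type*) [Monoid M] : RActOn M M where
  act a m := a * m
  act_one := by intro a; simp
  act_mul := by intro a m n; simp [mul_assoc]

end RActOn

/-!
Compare the given presentation `f : F_X → A` (relations `S`) with a finite one
`g : F_Y → A` (relations `R`). Since free acts are projective, there are homomorphisms
`h : F_Y → F_X` and `k : F_X → F_Y` over `A`. Only finitely many consequences of `S` are then
needed: the images under `h` of the finitely many relations in `R`, and `(x, 1) ~ h (k (x, 1))`
for the finitely many generators `x`. Each is a consequence of finitely many relations of `S`,
and these already define `A`: if `f p = f q` then `k p ~ k q` modulo `R`, hence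
`p ~ h (k p) ~ h (k q) ~ q`.
-/

namespace RActOn

variable {M : Type*} [Monoid M] {A B P Q X : Type*}

section Congruence

variable (α : RActOn M A)

theorem isCong_congClosure (ρ : A → A → Prop) : IsCong α (congClosure α ρ) := by
  refine ⟨⟨?_, ?_, ?_⟩, ?_⟩
  · exact fun a σ hσ _ => hσ.1.refl a
  · exact fun h σ hσ hρσ => hσ.1.symm (h σ hσ hρσ)
  · exact fun h₁ h₂ σ hσ hρσ => hσ.1.trans (h₁ σ hσ hρσ) (h₂ σ hσ hρσ)
  · exact fun a b m h σ hσ hρσ => hσ.2 a b m (h σ hσ hρσ)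

theorem congClosure_of_rel {ρ : A → A → Prop} {a b : A} (h : ρ a b) : congClosure α ρ a b :=
  fun _ _ hρσ => hρσ a b h

theorem congClosure_le {ρ σ : A → A → Prop} (hσ : IsCong α σ) (hρσ : ∀ a b, ρ a b → σ a b)
    {a b : A} (h : congClosure α ρ a b) : σ a b :=
  h σ hσ hρσ

theorem congClosure_mono {ρ σ : A → A → Prop} (hρσ : ∀ a b, ρ a b → σ a b) {a b : A}
    (h : congClosure α ρ a b) : congClosure α σ a b :=
  congClosure_le α (isCong_congClosure α σ) (fun _ _ hab => congClosure_of_rel α (hρσ _ _ hab)) h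

/-- Compactness of the congruence closure: the relation "already a consequence of finitely
many relations of `S`" is a congruence containing `S`. -/
theorem exists_finite_congClosure (S : Set (A × A)) {a b : A}
    (h : congClosure α (fun x y => (x, y) ∈ S) a b) :
    ∃ F ⊆ S, F.Finite ∧ congClosure α (fun x y => (x, y) ∈ F) a b := by
  have hE := fun F : Set (A × A) => (isCong_congClosure α fun x y => (x, y) ∈ F).1
  refine congClosure_le α (σ := fun a b => ∃ F ⊆ S, F.Finite ∧
    congClosure α (fun x y => (x, y) ∈ F) a b) ⟨⟨?_, ?_, ?_⟩, ?_⟩ ?_ h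
  · exact fun a => ⟨∅, Set.empty_subset S, Set.finite_empty, (hE ∅).refl a⟩
  · rintro a b ⟨F, hFS, hF, hab⟩
    exact ⟨F, hFS, hF, (hE F).symm hab⟩
  · rintro a b c ⟨F, hFS, hF, hab⟩ ⟨G, hGS, hG, hbc⟩
    refine ⟨F ∪ G, Set.union_subset hFS hGS, hF.union hG, (hE _).trans (y := b) ?_ ?_⟩
    · exact congClosure_mono α (fun _ _ => Or.inl) hab
    · exact congClosure_mono α (fun _ _ => Or.inr) hbc
  · rintro a b m ⟨F, hFS, hF, hab⟩
    exact ⟨F, hFS, hF, (isCong_congClosure α _).2 a b m hab⟩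
  · exact fun x y hxy => ⟨{(x, y)}, Set.singleton_subset_iff.2 hxy, Set.finite_singleton _,
      congClosure_of_rel α rfl⟩

theorem exists_finite_forall_congClosure (S : Set (A × A)) {T : Set (A × A)} (hT : T.Finite)
    (hTS : ∀ t ∈ T, congClosure α (fun x y => (x, y) ∈ S) t.1 t.2) :
    ∃ F ⊆ S, F.Finite ∧ ∀ t ∈ T, congClosure α (fun x y => (x, y) ∈ F) t.1 t.2 := by
  have := hT.to_subtype
  choose F hFS hF hFt using fun t : T => exists_finite_congClosure α S (hTS t t.2)
  refine ⟨⋃ t, F t, Set.iUnion_subset hFS, Set.finite_iUnion hF, fun t ht => ?_⟩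
  exact congClosure_mono α (fun _ _ h => Set.mem_iUnion.2 ⟨⟨t, ht⟩, h⟩) (hFt ⟨t, ht⟩)

end Congruence

section Hom

variable {α : RActOn M A} {β : RActOn M B} {γ : RActOn M P}

theorem IsHom.isCong_ker {f : A → B} (hf : IsHom α β f) : IsCong α (fun a b => f a = f b) :=
  ⟨⟨fun _ => rfl, Eq.symm, Eq.trans⟩, fun a b m (h : f a = f b) =>
    show f _ = f _ by rw [hf a m, hf b m, h]⟩

theorem IsCong.comap {ρ : B → B → Prop} (hρ : IsCong β ρ) {f : A → B} (hf : IsHom α β f) :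
    IsCong α (fun a b => ρ (f a) (f b)) :=
  ⟨⟨fun _ => hρ.1.refl _, hρ.1.symm, hρ.1.trans⟩, fun a b m h => by
    simpa only [hf a m, hf b m] using hρ.2 _ _ m h⟩

theorem IsHom.comp {f : A → B} {g : B → P} (hg : IsHom β γ g) (hf : IsHom α β f) :
    IsHom α γ (g ∘ f) := fun a m => by simp only [Function.comp, hf a m, hg (f a) m]

end Hom

section Free

theorem free_act_generator (p : X × M) : (free M X).act (p.1, 1) p.2 = p := by
  simp [free]

theorem IsHom.apply_free {β : RActOn M B} {f : X × M → B} (hf : IsHom (free M X) β f)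
    (p : X × M) : f p = β.act (f (p.1, 1)) p.2 := by
  rw [← hf, free_act_generator]

theorem isHom_free_lift (β : RActOn M B) (φ : X → B) :
    IsHom (free M X) β fun p => β.act (φ p.1) p.2 :=
  fun p m => β.act_mul (φ p.1) p.2 m

theorem exists_isHom_free_lift {α : RActOn M A} {γ : RActOn M P} {f : P → A}
    (hf : Function.Surjective f) (hf_hom : IsHom γ α f) {g : X × M → A}
    (hg : IsHom (free M X) α g) :
    ∃ h : X × M → P, IsHom (free M X) γ h ∧ ∀ p, f (h p) = g p := by
  choose φ hφ using fun x : X => hf (g (x, 1))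
  refine ⟨_, isHom_free_lift γ φ, fun p => ?_⟩
  rw [hf_hom, hφ, ← hg.apply_free]

theorem IsCong.forall_of_generators {ρ : X × M → X × M → Prop} (hρ : IsCong (free M X) ρ)
    {e : X × M → X × M} (he : IsHom (free M X) (free M X) e)
    (h : ∀ x, ρ (x, 1) (e (x, 1))) (p : X × M) : ρ p (e p) := by
  have := hρ.2 _ _ p.2 (h p.1)
  rwa [← he.apply_free, free_act_generator] at this

end Free

theorem ker_iff_congClosure_of_lifts {α : RActOn M A} {γ : RActOn M P} {δ : RActOn M Q}
    {f : P → A} (hf : IsHom γ α f) {g : Q → A} {R : Q → Q → Prop}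
    (hg : ∀ u v, g u = g v ↔ congClosure δ R u v) {h : Q → P} (hh : IsHom δ γ h)
    {k : P → Q} (hgk : ∀ p, g (k p) = f p) {ρ : P → P → Prop}
    (hρ : ∀ a b, ρ a b → f a = f b) (hRρ : ∀ a b, R a b → congClosure γ ρ (h a) (h b))
    (hhk : ∀ p, congClosure γ ρ p (h (k p))) (p q : P) :
    f p = f q ↔ congClosure γ ρ p q := by
  have hE := (isCong_congClosure γ ρ).1
  refine ⟨fun hpq => ?_, congClosure_le γ hf.isCong_ker hρ⟩
  have hk : congClosure δ R (k p) (k q) := (hg _ _).1 (by rw [hgk, hgk, hpq])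
  have hhpq : congClosure γ ρ (h (k p)) (h (k q)) :=
    congClosure_le δ ((isCong_congClosure γ ρ).comap hh) hRρ hk
  exact hE.trans (hhk p) (hE.trans hhpq (hE.symm (hhk q)))

end RActOn

open RActOn in
/-- If `A` is finitely presented and has a presentation `⟨X | S⟩` with `X` finite,
then some finite `S′ ⊆ S` already defines `A`. -/
theorem finite_subpresentation {M : Type*} [Monoid M] {A : Type*} (α : RActOn M A)
    {X : Type*} [Finite X] (S : Set ((X × M) × (X × M)))
    (hS : DefinedBy α X S) (hfp : FinitelyPresented α) :
    ∃ S' ⊆ S, S'.Finite ∧ DefinedBy α X S' := by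
  obtain ⟨f, hf_surj, hf_hom, hf_ker⟩ := hS
  obtain ⟨Y, _, R, hR, g, hg_surj, hg_hom, hg_ker⟩ := hfp
  obtain ⟨h, hh, hfh⟩ := exists_isHom_free_lift hf_surj hf_hom hg_hom
  obtain ⟨k, hk, hgk⟩ := exists_isHom_free_lift hg_surj hg_hom hf_hom
  let T : Set ((X × M) × (X × M)) :=
    Prod.map h h '' R ∪ Set.range fun x => ((x, 1), h (k (x, 1)))
  have hT : T.Finite := (hR.image _).union (Set.finite_range _)
  have hTS : ∀ t ∈ T, congClosure (free M X) (fun a b => (a, b) ∈ S) t.1 t.2 := by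
    rintro _ (⟨r, hr, rfl⟩ | ⟨x, rfl⟩) <;> refine (hf_ker _ _).1 ?_
    · simp only [Prod.map_fst, Prod.map_snd, hfh]
      exact (hg_ker _ _).2 (congClosure_of_rel _ hr)
    · rw [hfh, hgk]
  obtain ⟨S', hS'S, hS', hTS'⟩ := exists_finite_forall_congClosure _ S hT hTS
  refine ⟨S', hS'S, hS', f, hf_surj, hf_hom, ker_iff_congClosure_of_lifts hf_hom hg_ker hh hgk
    (fun a b hab => (hf_ker a b).2 (congClosure_of_rel _ (hS'S hab))) ?_ ?_⟩
  · exact fun a b hab => hTS' _ (Or.inl ⟨(a, b), hab, rfl⟩)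
  · exact (isCong_congClosure _ _).forall_of_generators (hh.comp hk)
      fun x => hTS' _ (Or.inr ⟨x, rfl⟩)
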